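/- arXiv:1705.00060 — 3 statements merged into one kernel-verified Lean document; each statement's English description precedes it below -/
import Mathlib

section
/- Let r > 0, 0 < p < 1, and n be a non-negative integer. Let q be a probability mass function on {0,1,...,n} such that for every function g : ℕ → ℝ one has ∑_{i=0}^{n} q_i · ( p(r+i)·g(i+1)·1{i < n} − i·g(i) ) = 0. Then q equals the truncated negative binomial probability mass function π, i.e., q_i = π_i for all i ∈ {0,1,...,n}. -/
/-- The negative binomial pmf: `P(Z = k)` for `Z ~ NB(r,p)`. -/
noncomputable def nbPmf (r p : ℝ) (k : ℕ) : ℝ :=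
  Real.Gamma (r + k) / (Real.Gamma r * k.factorial) * (1 - p) ^ r * p ^ k

/-- The truncated negative binomial pmf on `{0,...,n}`:
`π_i = P(Z = i) / P(Z ≤ n)` for `Z ~ NB(r,p)`. -/
noncomputable def truncNbPmf (r p : ℝ) (n i : ℕ) : ℝ :=
  nbPmf r p i / ∑ j ∈ Finset.range (n + 1), nbPmf r p j

/-!
Testing the Stein identity against the indicator of `k + 1` gives the recurrence
`(k + 1) q (k + 1) = p (r + k) q k` for `k < n`, which the negative binomial pmf also satisfies.
Both sequences are therefore proportional on `{0, …, n}`, and the normalisation `∑ q = 1` fixes the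
constant, since `P(Z = 0) = (1 - p) ^ r ≠ 0`.
-/

open Finset

lemma nbPmf_zero {r : ℝ} (hr : 0 < r) (p : ℝ) : nbPmf r p 0 = (1 - p) ^ r := by
  have hΓ : Real.Gamma r ≠ 0 := (Real.Gamma_pos_of_pos hr).ne'
  simp [nbPmf, hΓ]

lemma nbPmf_zero_ne_zero {r p : ℝ} (hr : 0 < r) (hp : p < 1) : nbPmf r p 0 ≠ 0 := by
  rw [nbPmf_zero hr]
  exact (Real.rpow_pos_of_pos (by linarith) r).ne'

lemma succ_mul_nbPmf_succ {r : ℝ} (hr : 0 < r) (p : ℝ) (k : ℕ) :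
    ((k : ℝ) + 1) * nbPmf r p (k + 1) = p * (r + k) * nbPmf r p k := by
  have hΓ : Real.Gamma (r + (k + 1 : ℕ)) = (r + k) * Real.Gamma (r + k) := by
    rw [Nat.cast_succ, ← add_assoc, Real.Gamma_add_one (by positivity)]
  have hΓr : Real.Gamma r ≠ 0 := (Real.Gamma_pos_of_pos hr).ne'
  unfold nbPmf
  rw [hΓ, Nat.factorial_succ, Nat.cast_mul, Nat.cast_succ]
  field_simp
  ring

lemma succ_mul_eq_of_stein {a q : ℕ → ℝ} {n : ℕ}
    (hstein : ∀ g : ℕ → ℝ, ∑ i ∈ range (n + 1),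
      q i * (a i * g (i + 1) * (if i < n then (1 : ℝ) else 0) - i * g i) = 0)
    {k : ℕ} (hk : k < n) :
    ((k : ℝ) + 1) * q (k + 1) = a k * q k := by
  have h := hstein fun m => if m = k + 1 then 1 else 0
  simp only [mul_sub, sum_sub_distrib, Nat.add_right_cancel_iff, mul_ite, mul_one, mul_zero,
    sum_ite_eq', mem_range, Nat.succ_lt_succ hk, if_true] at h
  rw [sum_eq_single_of_mem k (mem_range.2 (by omega)) fun i _ hik => by simp [hik],
    if_pos hk, if_pos rfl] at h
  push_cast at h
  linear_combination -h

lemma mul_eq_mul_of_succ_mul_eq {a x y : ℕ → ℝ} {n : ℕ}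
    (hx : ∀ k < n, ((k : ℝ) + 1) * x (k + 1) = a k * x k)
    (hy : ∀ k < n, ((k : ℝ) + 1) * y (k + 1) = a k * y k) :
    ∀ i ≤ n, x i * y 0 = x 0 * y i := by
  intro i hi
  induction i with
  | zero => ring
  | succ k ih =>
    have hk : ((k : ℝ) + 1) ≠ 0 := by positivity
    refine mul_left_cancel₀ hk ?_
    linear_combination y 0 * hx k hi - x 0 * hy k hi + a k * ih (by omega)

lemma eq_div_sum_of_mul_eq_mul {x y : ℕ → ℝ} {n : ℕ}
    (hprop : ∀ i ≤ n, x i * y 0 = x 0 * y i) (hx : ∑ i ∈ range (n + 1), x i = 1)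
    (hy : y 0 ≠ 0) :
    ∀ i ≤ n, x i = y i / ∑ j ∈ range (n + 1), y j := by
  have hsum : y 0 = x 0 * ∑ j ∈ range (n + 1), y j := by
    calc y 0 = ∑ i ∈ range (n + 1), x i * y 0 := by rw [← sum_mul, hx, one_mul]
      _ = ∑ i ∈ range (n + 1), x 0 * y i :=
          sum_congr rfl fun i hi => hprop i (Nat.lt_succ_iff.1 (mem_range.1 hi))
      _ = x 0 * ∑ j ∈ range (n + 1), y j := (mul_sum ..).symm
  rw [hsum] at hy
  intro i hi
  rw [eq_div_iff (right_ne_zero_of_mul hy)]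
  refine mul_left_cancel₀ (left_ne_zero_of_mul hy) ?_
  linear_combination hprop i hi - x i * hsum

theorem truncNb_stein_characterization_general (r p : ℝ) (hr : 0 < r) (hp1 : p < 1)
    (n : ℕ) (q : ℕ → ℝ)
    (hq_sum : ∑ i ∈ Finset.range (n + 1), q i = 1)
    (hq_stein : ∀ g : ℕ → ℝ,
      ∑ i ∈ Finset.range (n + 1),
          q i * (p * (r + i) * g (i + 1) * (if i < n then (1 : ℝ) else 0) - i * g i) = 0) :
    ∀ i ≤ n, q i = truncNbPmf r p n i :=
  eq_div_sum_of_mul_eq_mul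
    (mul_eq_mul_of_succ_mul_eq (fun _ hk => succ_mul_eq_of_stein hq_stein hk)
      (fun k _ => succ_mul_nbPmf_succ hr p k))
    hq_sum (nbPmf_zero_ne_zero hr hp1)

/-- Uniqueness: a pmf on {0,...,n} satisfying the truncated negative binomial Stein
identity for all functions g must be the truncated negative binomial pmf. -/
theorem truncNb_stein_characterization (r p : ℝ) (hr : 0 < r) (hp0 : 0 < p) (hp1 : p < 1)
    (n : ℕ) (q : ℕ → ℝ)
    (hq_nonneg : ∀ i ≤ n, 0 ≤ q i)
    (hq_sum : ∑ i ∈ Finset.range (n + 1), q i = 1)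
    (hq_stein : ∀ g : ℕ → ℝ,
      ∑ i ∈ Finset.range (n + 1),
          q i * (p * (r + i) * g (i + 1) * (if i < n then (1 : ℝ) else 0) - i * g i) = 0) :
    ∀ i ≤ n, q i = truncNbPmf r p n i :=
  truncNb_stein_characterization_general r p hr hp1 n q hq_sum hq_stein
end

section
/- Let r > 0, 0 < p < 1, and n be a non-negative integer, and let π be the truncated negative binomial probability mass function on {0,1,...,n}. For A = {0}, let g_A be the Stein solution with g_A(0) = 0, so that g_A(1) = ( 1 − π_0 )/( p·r ) by the Stein equation at i = 0. Then | g_A(1) − g_A(0) | = (1 − π_0)/(p·r); in particular the Stein factor bound (1 − π_0)/(p·r) is attained and hence sharp. -/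
/-- The solution of the truncated negative binomial Stein equation for the test function
`f = 1_A`, defined by `g 0 = 0`, the forward recursion
`g (i+1) = (1_A(i) - π(A) + i g(i)) / (p (r+i))` for `i < n`, and `g (i+1) = 0` for `i ≥ n`
(in particular `g (n+1) = 0`). -/
noncomputable def steinSolNB (r p : ℝ) (n : ℕ) (A : Finset ℕ) : ℕ → ℝ
  | 0 => 0
  | (i + 1) =>
    if i < n then
      ((if i ∈ A then (1 : ℝ) else 0) - ∑ j ∈ A, truncNbPmf r p n j
          + i * steinSolNB r p n A i) / (p * (r + i))
    else 0


/-! For `n > 0` the Stein recursion at `i = 0` gives `g(1) = (1 - π₀)/(p r)` outright; for `n = 0`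
both sides vanish, since `g(1) = g(n+1) = 0` and `π₀ = 1`. The value is nonnegative because
`π₀ ≤ 1`. -/

section

variable {r p : ℝ}

lemma nbPmf_pos (hr : 0 < r) (hp0 : 0 < p) (hp1 : p < 1) (k : ℕ) : 0 < nbPmf r p k := by
  have hΓk : 0 < Real.Gamma (r + k) := Real.Gamma_pos_of_pos (by positivity)
  have hΓ : 0 < Real.Gamma r := Real.Gamma_pos_of_pos hr
  have hq : 0 < (1 - p) ^ r := Real.rpow_pos_of_pos (by linarith) r
  unfold nbPmf
  positivity

lemma truncNbPmf_le_one (hr : 0 < r) (hp0 : 0 < p) (hp1 : p < 1) {n i : ℕ} (hi : i ≤ n) :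
    truncNbPmf r p n i ≤ 1 := by
  have hpos := nbPmf_pos hr hp0 hp1
  have hle : nbPmf r p i ≤ ∑ j ∈ Finset.range (n + 1), nbPmf r p j :=
    Finset.single_le_sum (fun j _ => (hpos j).le) (Finset.mem_range.2 (Nat.lt_succ_of_le hi))
  exact div_le_one_of_le₀ hle ((hpos i).le.trans hle)

lemma truncNbPmf_zero_zero (hr : 0 < r) (hp0 : 0 < p) (hp1 : p < 1) :
    truncNbPmf r p 0 0 = 1 := by
  rw [truncNbPmf, zero_add, Finset.sum_range_one, div_self (nbPmf_pos hr hp0 hp1 0).ne']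

end

section

variable (r p : ℝ) {n : ℕ} (A : Finset ℕ)

lemma steinSolNB_zero : steinSolNB r p n A 0 = 0 := rfl

lemma steinSolNB_succ_of_le {i : ℕ} (hi : n ≤ i) : steinSolNB r p n A (i + 1) = 0 := by
  simp [steinSolNB, hi.not_gt]

lemma steinSolNB_one (hn : 0 < n) :
    steinSolNB r p n A 1
      = ((if 0 ∈ A then (1 : ℝ) else 0) - ∑ j ∈ A, truncNbPmf r p n j) / (p * r) := by
  simp [steinSolNB, hn]

end

lemma steinSolNB_singleton_zero_one {r p : ℝ} (hr : 0 < r) (hp0 : 0 < p) (hp1 : p < 1) (n : ℕ) :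
    steinSolNB r p n {0} 1 = (1 - truncNbPmf r p n 0) / (p * r) := by
  rcases n.eq_zero_or_pos with rfl | hn
  · rw [steinSolNB_succ_of_le r p {0} (le_refl 0), truncNbPmf_zero_zero hr hp0 hp1, sub_self,
      zero_div]
  · simp [steinSolNB_one r p {0} hn]

/-- Sharpness of the Stein factor bound: for `A = {0}` the bound `(1 - π₀)/(p r)`
is attained by `|g(1) - g(0)|`. -/
theorem truncNb_stein_factor_sharp (r p : ℝ) (hr : 0 < r) (hp0 : 0 < p) (hp1 : p < 1)
    (n : ℕ) :
    |steinSolNB r p n {0} 1 - steinSolNB r p n {0} 0|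
      = (1 - truncNbPmf r p n 0) / (p * r) := by
  have hπ₀ : truncNbPmf r p n 0 ≤ 1 := truncNbPmf_le_one hr hp0 hp1 n.zero_le
  rw [steinSolNB_singleton_zero_one hr hp0 hp1, steinSolNB_zero, sub_zero, abs_of_nonneg]
  exact div_nonneg (sub_nonneg.2 hπ₀) (by positivity)
end

section
/- Let λ > 0 and n be a non-negative integer. Let W be a random variable taking values in {0,1,...,n}, and suppose there is a constant C ≥ 0 such that for every bounded function g : ℕ → ℝ, | E[ λ·g(W+1) − W·g(W) ] | ≤ C · sup_{i ∈ ℕ} | g(i+1) − g(i) |. Then d_TV( L(W), Po^{[0,n]}(λ) ) ≤ C·(1 − π_0)/λ ≤ C·(1 − e^{−λ})/λ, where π_0 = P(Z = 0)/P(Z ≤ n) for Z ~ Po(λ). -/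
/-- The Poisson pmf: `P(Z = k)` for `Z ~ Po(λ)`. -/
noncomputable def poissonPmf (lam : ℝ) (k : ℕ) : ℝ :=
  Real.exp (-lam) * lam ^ k / k.factorial

/-- The truncated Poisson pmf on `{0,...,n}`:
`π_i = P(Z = i) / P(Z ≤ n)` for `Z ~ Po(λ)`. -/
noncomputable def truncPoissonPmf (lam : ℝ) (n i : ℕ) : ℝ :=
  poissonPmf lam i / ∑ j ∈ Finset.range (n + 1), poissonPmf lam j

/-!
Stein's method for the truncated Poisson law `π`. For `A ⊆ {0, …, n}` the Stein equation
`λ g(j+1) - j g(j) = 1[j ∈ A] - π(A)` on `{0, …, n}` has an explicit bounded solution `g_A`,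
the sum of the solutions for the singletons `{a}`, and evaluating it at `W` gives
`E[λ g_A(W+1) - W g_A(W)] = P(W ∈ A) - π(A)`; for `A = {i | π i ≤ P(W = i)}` this is the
total variation distance. Since `(k+1) π(k+1) = λ π(k)`, the ratios `π(k+1)/π(k)` decrease,
and this makes the solution for `{a}` decrease everywhere except from `a` to `a + 1`, where it
grows by at most `(1 - π₀)/λ`. The increments of all singleton solutions sum to zero, so every
increment of `g_A` lies in `[-(1 - π₀)/λ, (1 - π₀)/λ]`. Finally `π₀ ≥ e^{-λ}` because
`P(Z ≤ n) ≤ 1`.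
-/

open Finset MeasureTheory

lemma poissonPmf_pos {lam : ℝ} (hlam : 0 < lam) (k : ℕ) : 0 < poissonPmf lam k := by
  unfold poissonPmf; positivity

lemma poissonPmf_succ (lam : ℝ) (k : ℕ) :
    ((k : ℝ) + 1) * poissonPmf lam (k + 1) = lam * poissonPmf lam k := by
  simp only [poissonPmf, Nat.factorial_succ, Nat.cast_mul, pow_succ]
  field_simp
  push_cast
  ring

lemma sum_poissonPmf_pos {lam : ℝ} (hlam : 0 < lam) (n : ℕ) :
    0 < ∑ k ∈ range (n + 1), poissonPmf lam k :=
  sum_pos (fun k _ => poissonPmf_pos hlam k) nonempty_range_add_one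

lemma sum_poissonPmf_le_one {lam : ℝ} (hlam : 0 ≤ lam) (n : ℕ) :
    ∑ k ∈ range n, poissonPmf lam k ≤ 1 := by
  calc ∑ k ∈ range n, poissonPmf lam k
      = Real.exp (-lam) * ∑ k ∈ range n, lam ^ k / k.factorial := by
        simp only [poissonPmf, mul_sum, mul_div_assoc]
    _ ≤ Real.exp (-lam) * Real.exp lam := by gcongr; exact Real.sum_le_exp_of_nonneg hlam n
    _ = 1 := by rw [← Real.exp_add, neg_add_cancel, Real.exp_zero]

section TruncPoisson

variable {lam : ℝ} {n : ℕ}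

lemma truncPoissonPmf_pos (hlam : 0 < lam) (i : ℕ) : 0 < truncPoissonPmf lam n i :=
  div_pos (poissonPmf_pos hlam i) (sum_poissonPmf_pos hlam n)

lemma truncPoissonPmf_succ (i : ℕ) :
    ((i : ℝ) + 1) * truncPoissonPmf lam n (i + 1) = lam * truncPoissonPmf lam n i := by
  simp only [truncPoissonPmf, ← mul_div_assoc, poissonPmf_succ]

lemma sum_truncPoissonPmf (hlam : 0 < lam) :
    ∑ i ∈ range (n + 1), truncPoissonPmf lam n i = 1 := by
  simp only [truncPoissonPmf, ← sum_div, div_self (sum_poissonPmf_pos hlam n).ne']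

lemma truncPoissonPmf_le_one (hlam : 0 < lam) {i : ℕ} (hi : i ≤ n) :
    truncPoissonPmf lam n i ≤ 1 :=
  sum_truncPoissonPmf (n := n) hlam ▸ single_le_sum (fun k _ => (truncPoissonPmf_pos hlam k).le)
    (mem_range.2 (Nat.lt_succ_of_le hi))

lemma exp_neg_le_truncPoissonPmf_zero (hlam : 0 < lam) :
    Real.exp (-lam) ≤ truncPoissonPmf lam n 0 := by
  rw [truncPoissonPmf, le_div_iff₀ (sum_poissonPmf_pos hlam n), poissonPmf]
  simpa using mul_le_mul_of_nonneg_left (sum_poissonPmf_le_one hlam.le (n + 1))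
    (Real.exp_pos (-lam)).le

noncomputable def truncPoissonCdf (lam : ℝ) (n j : ℕ) : ℝ :=
  ∑ k ∈ range (j + 1), truncPoissonPmf lam n k

lemma truncPoissonCdf_zero : truncPoissonCdf lam n 0 = truncPoissonPmf lam n 0 := by
  simp [truncPoissonCdf]

lemma truncPoissonCdf_succ (j : ℕ) :
    truncPoissonCdf lam n (j + 1) = truncPoissonCdf lam n j + truncPoissonPmf lam n (j + 1) :=
  sum_range_succ _ _

lemma truncPoissonCdf_succ' (j : ℕ) :
    truncPoissonCdf lam n (j + 1)
      = ∑ k ∈ range (j + 1), truncPoissonPmf lam n (k + 1) + truncPoissonPmf lam n 0 :=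
  sum_range_succ' _ _

lemma truncPoissonCdf_self (hlam : 0 < lam) : truncPoissonCdf lam n n = 1 :=
  sum_truncPoissonPmf hlam

lemma truncPoissonCdf_add_sub (j e : ℕ) :
    truncPoissonCdf lam n (j + e) - truncPoissonCdf lam n j
      = ∑ k ∈ range e, truncPoissonPmf lam n (j + 1 + k) := by
  rw [truncPoissonCdf, truncPoissonCdf, show j + e + 1 = j + 1 + e by omega, sum_range_add]
  ring

lemma truncPoissonPmf_succ_mul_le (hlam : 0 < lam) {j k : ℕ} (hjk : j ≤ k) :
    truncPoissonPmf lam n (k + 1) * truncPoissonPmf lam n j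
      ≤ truncPoissonPmf lam n k * truncPoissonPmf lam n (j + 1) := by
  refine le_of_mul_le_mul_left ?_ hlam
  calc lam * (truncPoissonPmf lam n (k + 1) * truncPoissonPmf lam n j)
      = ((j : ℝ) + 1) * (truncPoissonPmf lam n (k + 1) * truncPoissonPmf lam n (j + 1)) := by
        linear_combination
          -truncPoissonPmf lam n (k + 1) * truncPoissonPmf_succ (lam := lam) (n := n) j
    _ ≤ ((k : ℝ) + 1) * (truncPoissonPmf lam n (k + 1) * truncPoissonPmf lam n (j + 1)) := by
        gcongr
        exact (mul_pos (truncPoissonPmf_pos hlam _) (truncPoissonPmf_pos hlam _)).le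
    _ = lam * (truncPoissonPmf lam n k * truncPoissonPmf lam n (j + 1)) := by
        linear_combination
          truncPoissonPmf lam n (j + 1) * truncPoissonPmf_succ (lam := lam) (n := n) k

lemma truncPoissonCdf_div_le_succ (hlam : 0 < lam) (j : ℕ) :
    truncPoissonCdf lam n j / truncPoissonPmf lam n j
      ≤ truncPoissonCdf lam n (j + 1) / truncPoissonPmf lam n (j + 1) := by
  rw [div_le_div_iff₀ (truncPoissonPmf_pos hlam j) (truncPoissonPmf_pos hlam (j + 1))]
  calc truncPoissonCdf lam n j * truncPoissonPmf lam n (j + 1)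
      = ∑ k ∈ range (j + 1), truncPoissonPmf lam n k * truncPoissonPmf lam n (j + 1) :=
        sum_mul _ _ _
    _ ≤ ∑ k ∈ range (j + 1), truncPoissonPmf lam n (k + 1) * truncPoissonPmf lam n j := by
        refine sum_le_sum fun k hk => ?_
        have := truncPoissonPmf_succ_mul_le (n := n) hlam (Nat.lt_succ_iff.1 (mem_range.1 hk))
        linarith
    _ ≤ truncPoissonCdf lam n (j + 1) * truncPoissonPmf lam n j := by
        rw [truncPoissonCdf_succ', add_mul, sum_mul]
        have := mul_pos (truncPoissonPmf_pos (n := n) hlam 0) (truncPoissonPmf_pos (n := n) hlam j)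
        linarith

lemma truncPoissonCdf_sub_div_succ_le (hlam : 0 < lam) {j N : ℕ} (hjN : j + 1 ≤ N) :
    (truncPoissonCdf lam n N - truncPoissonCdf lam n (j + 1)) / truncPoissonPmf lam n (j + 1)
      ≤ (truncPoissonCdf lam n N - truncPoissonCdf lam n j) / truncPoissonPmf lam n j := by
  obtain ⟨e, rfl⟩ := Nat.exists_eq_add_of_le hjN
  rw [div_le_div_iff₀ (truncPoissonPmf_pos hlam (j + 1)) (truncPoissonPmf_pos hlam j),
    truncPoissonCdf_add_sub, show j + 1 + e = j + (e + 1) by omega, truncPoissonCdf_add_sub,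
    sum_mul, sum_mul, sum_range_succ]
  have hlast := mul_pos (truncPoissonPmf_pos (n := n) hlam (j + 1 + e))
    (truncPoissonPmf_pos (n := n) hlam (j + 1))
  have hterms : ∑ k ∈ range e, truncPoissonPmf lam n (j + 1 + 1 + k) * truncPoissonPmf lam n j
      ≤ ∑ k ∈ range e, truncPoissonPmf lam n (j + 1 + k) * truncPoissonPmf lam n (j + 1) :=
    sum_le_sum fun k _ => by
      simpa only [show j + 1 + 1 + k = j + 1 + k + 1 by omega]
        using truncPoissonPmf_succ_mul_le (n := n) hlam (show j ≤ j + 1 + k by omega)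
  linarith

lemma lam_mul_truncPoissonCdf_le (hlam : 0 < lam) (j : ℕ) :
    lam * truncPoissonCdf lam n j
      ≤ ((j : ℝ) + 1) * (truncPoissonCdf lam n (j + 1) - truncPoissonPmf lam n 0) := by
  rw [truncPoissonCdf_succ', add_sub_cancel_right, truncPoissonCdf, mul_sum, mul_sum]
  refine sum_le_sum fun k hk => ?_
  rw [← truncPoissonPmf_succ]
  have : (k : ℝ) ≤ j := by exact_mod_cast Nat.lt_succ_iff.1 (mem_range.1 hk)
  nlinarith [truncPoissonPmf_pos (n := n) hlam (k + 1)]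

/-- The value at `j + 1` of the solution `g` of the Stein equation
`λ g(j+1) - j g(j) = 1[j = a] - π_a` of the truncated Poisson law `π`. -/
noncomputable def steinSingleton (lam : ℝ) (n a j : ℕ) : ℝ :=
  truncPoissonPmf lam n a / lam *
    (((if a ≤ j then 1 else 0) - truncPoissonCdf lam n j) / truncPoissonPmf lam n j)

lemma steinSingleton_stein_eq (hlam : 0 < lam) (a j : ℕ) :
    lam * steinSingleton lam n a j - j * steinSingleton lam n a (j - 1)
      = (if a = j then 1 else 0) - truncPoissonPmf lam n a := by
  have hπ := fun k => (truncPoissonPmf_pos (n := n) hlam k).ne'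
  cases j with
  | zero =>
    rw [steinSingleton, truncPoissonCdf_zero]
    rcases Nat.eq_zero_or_pos a with rfl | ha
    · simp only [le_refl, ite_true]; field_simp [hπ 0]; ring
    · simp only [if_neg ha.ne', if_neg (Nat.not_le_of_lt ha)]; field_simp [hπ 0]; ring
  | succ i =>
    have hsucc : truncPoissonPmf lam n (i + 1) = lam * truncPoissonPmf lam n i / (i + 1) := by
      rw [eq_div_iff (by positivity), ← truncPoissonPmf_succ, mul_comm]
    simp only [steinSingleton, Nat.add_sub_cancel, truncPoissonCdf_succ]
    push_cast
    split_ifs <;> try omega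
    all_goals
      try subst a
      rw [hsucc]
      field_simp [hπ i, hlam.ne']
      ring

lemma steinSingleton_succ_sub_le (hlam : 0 < lam) (a : ℕ) {j : ℕ} (hj : j + 1 ≤ n) :
    steinSingleton lam n a (j + 1) - steinSingleton lam n a j
      ≤ if a = j + 1 then (1 - truncPoissonPmf lam n 0) / lam else 0 := by
  have hπ := fun k => truncPoissonPmf_pos (n := n) hlam k
  have hcoef : 0 ≤ truncPoissonPmf lam n a / lam := (div_pos (hπ a) hlam).le
  rcases lt_trichotomy a (j + 1) with ha | rfl | ha
  · have htail :=
      truncPoissonCdf_self (n := n) hlam ▸ truncPoissonCdf_sub_div_succ_le (n := n) hlam hj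
    rw [if_neg ha.ne, sub_nonpos, steinSingleton, steinSingleton, if_pos ha.le,
      if_pos (Nat.lt_succ_iff.1 ha)]
    exact mul_le_mul_of_nonneg_left htail hcoef
  · have hsucc : truncPoissonPmf lam n (j + 1) = lam * truncPoissonPmf lam n j / (j + 1) := by
      rw [eq_div_iff (by positivity), ← truncPoissonPmf_succ, mul_comm]
    have hcdf := lam_mul_truncPoissonCdf_le (n := n) hlam j
    have hj1 : (0 : ℝ) < j + 1 := by positivity
    rw [if_pos rfl, steinSingleton, steinSingleton, if_pos le_rfl, if_neg (by omega)]
    calc _ = (1 - truncPoissonCdf lam n (j + 1)) / lam + truncPoissonCdf lam n j / (j + 1) := by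
          rw [hsucc]; field_simp [(hπ j).ne']; ring
      _ ≤ (1 - truncPoissonCdf lam n (j + 1)) / lam
            + (truncPoissonCdf lam n (j + 1) - truncPoissonPmf lam n 0) / lam := by
          gcongr _ + ?_
          rw [div_le_div_iff₀ hj1 hlam]
          linarith
      _ = (1 - truncPoissonPmf lam n 0) / lam := by ring
  · have hcdf := truncPoissonCdf_div_le_succ (n := n) hlam j
    rw [if_neg ha.ne', sub_nonpos, steinSingleton, steinSingleton, if_neg (by omega),
      if_neg (by omega), zero_sub, zero_sub, neg_div, neg_div]
    exact mul_le_mul_of_nonneg_left (neg_le_neg hcdf) hcoef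

lemma one_sub_truncPoissonPmf_zero_div_nonneg (hlam : 0 < lam) :
    0 ≤ (1 - truncPoissonPmf lam n 0) / lam :=
  div_nonneg (sub_nonneg.2 (truncPoissonPmf_le_one hlam (Nat.zero_le n))) hlam.le

lemma sum_steinSingleton_eq_zero (hlam : 0 < lam) {j : ℕ} (hj : j ≤ n) :
    ∑ a ∈ range (n + 1), steinSingleton lam n a j = 0 := by
  have hlow : ∑ a ∈ range (n + 1), truncPoissonPmf lam n a * (if a ≤ j then 1 else 0)
      = truncPoissonCdf lam n j := by
    rw [truncPoissonCdf]
    simp only [mul_ite, mul_one, mul_zero, ← sum_filter]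
    congr 1
    ext a
    simp only [mem_filter, mem_range]
    omega
  calc ∑ a ∈ range (n + 1), steinSingleton lam n a j
      = (∑ a ∈ range (n + 1), truncPoissonPmf lam n a * (if a ≤ j then 1 else 0)
          - (∑ a ∈ range (n + 1), truncPoissonPmf lam n a) * truncPoissonCdf lam n j)
          / (lam * truncPoissonPmf lam n j) := by
        rw [sum_mul, ← sum_sub_distrib, sum_div]
        refine sum_congr rfl fun a _ => ?_
        rw [steinSingleton]
        ring
    _ = 0 := by rw [hlow, sum_truncPoissonPmf hlam, one_mul, sub_self, zero_div]

lemma abs_sum_steinSingleton_succ_sub_le (hlam : 0 < lam) {A : Finset ℕ}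
    (hA : A ⊆ range (n + 1)) {j : ℕ} (hj : j + 1 ≤ n) :
    |∑ a ∈ A, (steinSingleton lam n a (j + 1) - steinSingleton lam n a j)|
      ≤ (1 - truncPoissonPmf lam n 0) / lam := by
  have hupper : ∀ B : Finset ℕ,
      ∑ a ∈ B, (steinSingleton lam n a (j + 1) - steinSingleton lam n a j)
        ≤ (1 - truncPoissonPmf lam n 0) / lam := fun B =>
    calc _ ≤ ∑ a ∈ B, if a = j + 1 then (1 - truncPoissonPmf lam n 0) / lam else 0 :=
          sum_le_sum fun a _ => steinSingleton_succ_sub_le hlam a hj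
      _ ≤ (1 - truncPoissonPmf lam n 0) / lam := by
          rw [sum_ite_eq']
          split_ifs <;> simp [one_sub_truncPoissonPmf_zero_div_nonneg hlam]
  have htotal :
      ∑ a ∈ range (n + 1) \ A, (steinSingleton lam n a (j + 1) - steinSingleton lam n a j)
        + ∑ a ∈ A, (steinSingleton lam n a (j + 1) - steinSingleton lam n a j) = 0 := by
    rw [sum_sdiff hA, sum_sub_distrib, sum_steinSingleton_eq_zero hlam hj,
      sum_steinSingleton_eq_zero hlam (by omega), sub_zero]
  rw [abs_le]
  constructor <;> linarith [hupper A, hupper (range (n + 1) \ A)]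

/-- The solution of the Stein equation `λ g(j+1) - j g(j) = 1[j ∈ A] - π(A)` for `j ≤ n`,
extended by `g 0 = g 1` and by the constant `g (n + 1)` beyond `n + 1`. -/
noncomputable def steinSolution (lam : ℝ) (n : ℕ) (A : Finset ℕ) (m : ℕ) : ℝ :=
  ∑ a ∈ A, steinSingleton lam n a (min (m - 1) n)

lemma steinSolution_stein_eq (hlam : 0 < lam) (A : Finset ℕ) {j : ℕ} (hj : j ≤ n) :
    lam * steinSolution lam n A (j + 1) - j * steinSolution lam n A j
      = (if j ∈ A then 1 else 0) - ∑ a ∈ A, truncPoissonPmf lam n a := by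
  simp only [steinSolution, Nat.add_sub_cancel, min_eq_left hj,
    min_eq_left ((j.sub_le 1).trans hj), mul_sum, ← sum_sub_distrib,
    steinSingleton_stein_eq hlam]
  rw [sum_sub_distrib, sum_ite_eq']

lemma steinSolution_bounded (A : Finset ℕ) : ∃ M, ∀ m, |steinSolution lam n A m| ≤ M :=
  ⟨∑ j ∈ range (n + 1), |∑ a ∈ A, steinSingleton lam n a j|, fun _ =>
    single_le_sum (f := fun j => |∑ a ∈ A, steinSingleton lam n a j|) (fun _ _ => abs_nonneg _)
      (mem_range.2 (Nat.lt_succ_of_le (min_le_right _ _)))⟩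

lemma abs_steinSolution_succ_sub_le (hlam : 0 < lam) {A : Finset ℕ} (hA : A ⊆ range (n + 1))
    (m : ℕ) : |steinSolution lam n A (m + 1) - steinSolution lam n A m|
      ≤ (1 - truncPoissonPmf lam n 0) / lam := by
  rcases m with _ | j
  · simpa [steinSolution] using one_sub_truncPoissonPmf_zero_div_nonneg hlam
  by_cases hj : j + 1 ≤ n
  · rw [steinSolution, steinSolution, ← sum_sub_distrib, Nat.add_sub_cancel, Nat.add_sub_cancel,
      min_eq_left hj, min_eq_left (by omega)]
    exact abs_sum_steinSingleton_succ_sub_le hlam hA hj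
  · rw [steinSolution, steinSolution, Nat.add_sub_cancel, Nat.add_sub_cancel,
      min_eq_right (by omega), min_eq_right (by omega), sub_self, abs_zero]
    exact one_sub_truncPoissonPmf_zero_div_nonneg hlam

end TruncPoisson

lemma half_sum_abs_eq_sum_filter_nonneg {ι : Type*} {s : Finset ι} {x : ι → ℝ}
    (hx : ∑ i ∈ s, x i = 0) :
    1 / 2 * ∑ i ∈ s, |x i| = ∑ i ∈ s with 0 ≤ x i, x i := by
  have habs : ∀ i, |x i| = 2 * (if 0 ≤ x i then x i else 0) - x i := fun i => by
    split_ifs with hi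
    · rw [abs_of_nonneg hi]; ring
    · rw [abs_of_neg (not_le.1 hi)]; ring
  simp only [habs, sum_sub_distrib, ← mul_sum, hx, sum_filter]
  ring

section Integral

variable {Ω : Type*} [MeasurableSpace Ω] (μ : Measure Ω) {n : ℕ} {W : Ω → ℕ}

lemma integral_comp_eq_sum [IsFiniteMeasure μ] (hW : Measurable W) (hWn : ∀ ω, W ω ≤ n)
    (H : ℕ → ℝ) :
    ∫ ω, H (W ω) ∂μ = ∑ j ∈ range (n + 1), (μ {ω | W ω = j}).toReal * H j := by
  have hmeas : ∀ j : ℕ, MeasurableSet {ω | W ω = j} := fun j => hW (measurableSet_singleton j)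
  have hsplit : (fun ω => H (W ω))
      = fun ω => ∑ j ∈ range (n + 1), {ω | W ω = j}.indicator (fun _ => H j) ω := by
    funext ω
    rw [sum_eq_single_of_mem (f := fun j => {ω | W ω = j}.indicator (fun _ => H j) ω) (W ω)
      (mem_range.2 (Nat.lt_succ_of_le (hWn ω)))
      fun j _ hj => Set.indicator_of_notMem (Ne.symm hj) _]
    exact (Set.indicator_of_mem rfl _).symm
  rw [hsplit, integral_finsetSum _ fun j _ => (integrable_const _).indicator (hmeas j)]
  refine sum_congr rfl fun j _ => ?_
  rw [integral_indicator_const _ (hmeas j), smul_eq_mul, measureReal_def]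

lemma sum_measure_toReal_eq_one [IsProbabilityMeasure μ] (hW : Measurable W)
    (hWn : ∀ ω, W ω ≤ n) :
    ∑ j ∈ range (n + 1), (μ {ω | W ω = j}).toReal = 1 := by
  simpa using (integral_comp_eq_sum μ hW hWn fun _ => 1).symm

lemma integral_stein_steinSolution [IsProbabilityMeasure μ] {lam : ℝ} (hlam : 0 < lam)
    (hW : Measurable W) (hWn : ∀ ω, W ω ≤ n) {A : Finset ℕ} (hA : A ⊆ range (n + 1)) :
    ∫ ω, (lam * steinSolution lam n A (W ω + 1)
        - (W ω : ℝ) * steinSolution lam n A (W ω)) ∂μ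
      = ∑ a ∈ A, ((μ {ω | W ω = a}).toReal - truncPoissonPmf lam n a) := by
  rw [integral_comp_eq_sum μ hW hWn fun j => lam * steinSolution lam n A (j + 1)
      - j * steinSolution lam n A j,
    sum_congr rfl fun j hj => by
      rw [steinSolution_stein_eq hlam A (Nat.lt_succ_iff.1 (mem_range.1 hj)), mul_sub, mul_ite,
        mul_one, mul_zero],
    sum_sub_distrib, sum_ite_mem, inter_eq_right.2 hA, ← sum_mul,
    sum_measure_toReal_eq_one μ hW hWn, one_mul, sum_sub_distrib]

end Integral

/-- Main theorem (Poisson case): if a Stein's-method bound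
`|E[λ g(W+1) - W g(W)]| ≤ C · sup_i |g(i+1) - g(i)|` holds for all bounded `g : ℕ → ℝ`
for a random variable `W` with values in `{0,...,n}`, then
`d_TV(L(W), Po^{[0,n]}(λ)) ≤ C (1 - π₀)/λ ≤ C (1 - e^{-λ})/λ`. -/
theorem truncPoisson_approximation {Ω : Type*} [MeasurableSpace Ω]
    (μ : Measure Ω) [IsProbabilityMeasure μ]
    (lam : ℝ) (hlam : 0 < lam)
    (n : ℕ) (W : Ω → ℕ) (hW : Measurable W) (hWn : ∀ ω, W ω ≤ n)
    (C : ℝ) (hC : 0 ≤ C)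
    (hstein : ∀ g : ℕ → ℝ, (∃ M : ℝ, ∀ k : ℕ, |g k| ≤ M) →
      |∫ ω, (lam * g (W ω + 1) - (W ω : ℝ) * g (W ω)) ∂μ|
        ≤ C * ⨆ i : ℕ, |g (i + 1) - g i|) :
    (1 / 2) * ∑ i ∈ Finset.range (n + 1),
        |(μ {ω | W ω = i}).toReal - truncPoissonPmf lam n i|
      ≤ C * ((1 - truncPoissonPmf lam n 0) / lam) ∧
    C * ((1 - truncPoissonPmf lam n 0) / lam)
      ≤ C * ((1 - Real.exp (-lam)) / lam) := by
  set A := {i ∈ range (n + 1) | 0 ≤ (μ {ω | W ω = i}).toReal - truncPoissonPmf lam n i}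
  have hA : A ⊆ range (n + 1) := filter_subset _ _
  have hsum :
      ∑ i ∈ range (n + 1), ((μ {ω | W ω = i}).toReal - truncPoissonPmf lam n i) = 0 := by
    rw [sum_sub_distrib, sum_measure_toReal_eq_one μ hW hWn, sum_truncPoissonPmf hlam, sub_self]
  refine ⟨?_, by gcongr; exact exp_neg_le_truncPoissonPmf_zero hlam⟩
  calc _ = ∑ i ∈ A, ((μ {ω | W ω = i}).toReal - truncPoissonPmf lam n i) :=
        half_sum_abs_eq_sum_filter_nonneg hsum
    _ ≤ |∫ ω, (lam * steinSolution lam n A (W ω + 1)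
          - (W ω : ℝ) * steinSolution lam n A (W ω)) ∂μ| := by
        rw [integral_stein_steinSolution μ hlam hW hWn hA]
        exact le_abs_self _
    _ ≤ C * ⨆ i : ℕ, |steinSolution lam n A (i + 1) - steinSolution lam n A i| :=
        hstein _ (steinSolution_bounded A)
    _ ≤ C * ((1 - truncPoissonPmf lam n 0) / lam) := by
        gcongr
        exact ciSup_le (abs_steinSolution_succ_sub_le hlam hA)
end
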